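/- If G* ⊆ Q⁰_λ is directed with respect to ≤⁰ and |G*| ≤ λ, then G* has a ≤⁰-upper bound in Q⁰_λ; consequently, fil(G*) is not an ultrafilter on λ. -/

import Mathlib

/-!
If `p ≤⁰ q`, one threshold works for all sets that are large on every block of `p`: otherwise
counterexamples at a club of levels, glued on disjoint unions of `p`-blocks, would give a single
such set outside `fil q`. Enumerate `G*` as `P j`, `j < λ`, and pick for each finite `F` a common
`≤⁰`-upper bound `q_F` of the `P j`, `j ∈ F`, with a common threshold. On a block `[δ, δ')` of the
diagonal intersection `C` of the clubs of the `q_F`, the traces of the sets large on every block of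
some `P j`, `j < δ`, have the finite intersection property: finitely many of them all belong to the
ultrafilter of some `q_F` on its block at `δ`, which lies inside `[δ, δ')`. Non-principal
ultrafilters extending these traces give the upper bound `r`. Finally `fil(G*) ⊆ fil(r)`, and
`fil(r)` contains neither the union of the blocks of `r` starting at successor points of `C^r`
nor its complement.
-/

open Set

noncomputable section

def IsUltrafilterOn {α : Type*} (Z : Set α) (d : Set (Set α)) : Prop :=
  (∀ A ∈ d, A ⊆ Z) ∧ Z ∈ d ∧ ∅ ∉ d ∧
  (∀ A B : Set α, A ∈ d → A ⊆ B → B ⊆ Z → B ∈ d) ∧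
  (∀ A B : Set α, A ∈ d → B ∈ d → A ∩ B ∈ d) ∧
  (∀ A : Set α, A ⊆ Z → (A ∈ d ∨ Z \ A ∈ d))

def IsNonprincipalOn {α : Type*} (Z : Set α) (d : Set (Set α)) : Prop :=
  IsUltrafilterOn Z d ∧ ∀ x : α, {x} ∉ d

def IsClubIn (C : Set Ordinal) (lam : Ordinal) : Prop :=
  C ⊆ Iio lam ∧ (∀ β < lam, ∃ δ ∈ C, β < δ) ∧
  (∀ β < lam, β ≠ 0 → sSup (C ∩ Iio β) = β → β ∈ C)

def nextIn (C : Set Ordinal) (δ : Ordinal) : Ordinal := sInf (C \ Iic δ)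

/-- An element of `Q⁰_λ`: a club `C` of limit ordinals below `λ`, together with
a non-principal ultrafilter `d δ` on the interval `Z_δ = [δ, min(C ∖ (δ+1)))` for each `δ ∈ C`. -/
structure QZero (lam : Ordinal) where
  C : Set Ordinal
  d : Ordinal → Set (Set Ordinal)
  club : IsClubIn C lam
  limit : ∀ δ ∈ C, Order.IsSuccLimit δ
  ultra : ∀ δ ∈ C, IsNonprincipalOn (Ico δ (nextIn C δ)) (d δ)

def QZero.Z {lam : Ordinal} (p : QZero lam) (δ : Ordinal) : Set Ordinal :=
  Ico δ (nextIn p.C δ)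

def fil {lam : Ordinal} (p : QZero lam) : Set (Set Ordinal) :=
  {A | A ⊆ Iio lam ∧ ∃ ε < lam, ∀ δ ∈ p.C, ε ≤ δ → A ∩ p.Z δ ∈ p.d δ}

def le0 {lam : Ordinal} (p q : QZero lam) : Prop := fil p ⊆ fil q

def filG {lam : Ordinal} (G : Set (QZero lam)) : Set (Set Ordinal) :=
  ⋃ p ∈ G, fil p

universe u v

open Filter Order Function

namespace IsClubIn

variable {lam δ x : Ordinal} {C : Set Ordinal}

lemma nonempty_sdiff_Iic (hC : IsClubIn C lam) (hx : x < lam) : (C \ Iic x).Nonempty :=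
  let ⟨δ, hδC, hδ⟩ := hC.2.1 x hx
  ⟨δ, hδC, not_le.2 hδ⟩

lemma nextIn_mem (hC : IsClubIn C lam) (hx : x < lam) : nextIn C x ∈ C :=
  (csInf_mem (hC.nonempty_sdiff_Iic hx)).1

lemma lt_nextIn (hC : IsClubIn C lam) (hx : x < lam) : x < nextIn C x :=
  not_le.1 (csInf_mem (hC.nonempty_sdiff_Iic hx)).2

lemma nextIn_lt (hC : IsClubIn C lam) (hx : x < lam) : nextIn C x < lam :=
  hC.1 (hC.nextIn_mem hx)

lemma mem_of_forall_exists_lt (hC : IsClubIn C lam) (hδ : δ < lam) (hδ0 : δ ≠ 0)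
    (h : ∀ α < δ, ∃ β ∈ C, α < β ∧ β < δ) : δ ∈ C := by
  refine hC.2.2 δ hδ hδ0 (le_antisymm (csSup_le' fun β hβ => hβ.2.le) (le_of_forall_lt ?_))
  intro α hα
  obtain ⟨β, hβC, hαβ, hβδ⟩ := h α hα
  exact hαβ.trans_le (le_csSup ⟨δ, fun γ hγ => hγ.2.le⟩ ⟨hβC, hβδ⟩)

end IsClubIn

section Blocks

variable {C : Set Ordinal} {a b β β' x : Ordinal}

lemma nextIn_le_of_mem (hβ : β ∈ C) (h : x < β) : nextIn C x ≤ β :=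
  csInf_le' ⟨hβ, not_le.2 h⟩

lemma Ico_nextIn_subset_or_disjoint (ha : a ∈ C) (hb : b ∈ C) (β : Ordinal) :
    Ico β (nextIn C β) ⊆ Ico a b ∨ Disjoint (Ico β (nextIn C β)) (Ico a b) := by
  rcases lt_or_ge β a with hβa | haβ
  · exact Or.inr (Ico_disjoint_Ico.2 ((min_le_left _ _).trans
      ((nextIn_le_of_mem ha hβa).trans (le_max_right _ _))))
  rcases lt_or_ge β b with hβb | hbβ
  · exact Or.inl (Ico_subset_Ico haβ (nextIn_le_of_mem hb hβb))
  · exact Or.inr (Ico_disjoint_Ico.2 ((min_le_right _ _).trans (hbβ.trans (le_max_left _ _))))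

lemma disjoint_Ico_nextIn (hβ : β ∈ C) (hβ' : β' ∈ C) (hne : β ≠ β') :
    Disjoint (Ico β (nextIn C β)) (Ico β' (nextIn C β')) := by
  rcases hne.lt_or_gt with h | h
  · exact Ico_disjoint_Ico.2 ((min_le_left _ _).trans
      ((nextIn_le_of_mem hβ' h).trans (le_max_right _ _)))
  · exact Ico_disjoint_Ico.2 ((min_le_right _ _).trans
      ((nextIn_le_of_mem hβ h).trans (le_max_left _ _)))

lemma Ico_infinite_of_isSuccLimit (hab : a < b) (hb : IsSuccLimit b) : (Ico a b).Infinite := by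
  have : Nonempty (Ico a b) := ⟨⟨a, le_rfl, hab⟩⟩
  have : NoMaxOrder (Ico a b) :=
    ⟨fun x => ⟨⟨succ x, x.2.1.trans (le_succ _), hb.succ_lt x.2.2⟩, lt_succ x.1⟩⟩
  exact infinite_coe_iff.1 NoMaxOrder.infinite

end Blocks

section Ultrafilters

variable {α : Type*} {Z : Set α} {d : Set (Set α)}

def IsUltrafilterOn.toFilter (h : IsUltrafilterOn Z d) : Filter α where
  sets := {A | A ∩ Z ∈ d}
  univ_sets := by simpa using h.2.1
  sets_of_superset hA hAB := h.2.2.2.1 _ _ hA (inter_subset_inter_left _ hAB) inter_subset_right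
  inter_sets {A B} hA hB := by
    show (A ∩ B) ∩ Z ∈ d
    rw [inter_inter_distrib_right]
    exact h.2.2.2.2.1 _ _ hA hB

lemma IsUltrafilterOn.mem_toFilter (h : IsUltrafilterOn Z d) {A : Set α} :
    A ∈ h.toFilter ↔ A ∩ Z ∈ d :=
  Iff.rfl

lemma IsUltrafilterOn.neBot_toFilter (h : IsUltrafilterOn Z d) : h.toFilter.NeBot :=
  ⟨fun hbot => h.2.2.1 (by simpa using h.mem_toFilter.1 (hbot ▸ mem_bot : ∅ ∈ h.toFilter))⟩

lemma IsNonprincipalOn.toFilter_le_cofinite (h : IsNonprincipalOn Z d) :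
    h.1.toFilter ≤ cofinite := by
  refine le_cofinite_iff_compl_singleton_mem.2 fun x => ?_
  rcases h.1.2.2.2.2.2 ({x} ∩ Z) inter_subset_right with hx | hx
  · obtain ⟨y, hy⟩ := nonempty_iff_ne_empty.2 (fun he => h.1.2.2.1 (he ▸ hx))
    obtain rfl : y = x := hy.1
    exact absurd (by simpa [inter_eq_left.2 (singleton_subset_iff.2 hy.2)] using hx) (h.2 y)
  · rw [IsUltrafilterOn.mem_toFilter]
    convert hx using 1
    ext y
    simp only [mem_inter_iff, mem_compl_iff, Set.mem_sdiff]
    tauto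

lemma isNonprincipalOn_of_ultrafilter (U : Ultrafilter α) (hZ : Z ∈ U)
    (hU : (U : Filter α) ≤ cofinite) : IsNonprincipalOn Z {A | A ⊆ Z ∧ A ∈ U} := by
  refine ⟨⟨fun A hA => hA.1, ⟨subset_rfl, hZ⟩, fun h => U.empty_notMem h.2,
    fun A B hA hAB hBZ => ⟨hBZ, mem_of_superset hA.2 hAB⟩,
    fun A B hA hB => ⟨inter_subset_left.trans hA.1, inter_mem hA.2 hB.2⟩, fun A hA => ?_⟩,
    fun x hx => U.compl_mem_iff_notMem.1 (hU (by simp)) hx.2⟩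
  rcases U.mem_or_compl_mem A with h | h
  · exact Or.inl ⟨hA, h⟩
  · exact Or.inr ⟨sdiff_subset, inter_mem hZ h⟩

lemma exists_isNonprincipalOn (l : Filter α) [l.NeBot] (hZ : Z ∈ l) (hl : l ≤ cofinite) :
    ∃ d, IsNonprincipalOn Z d ∧ ∀ A ∈ l, A ∩ Z ∈ d := by
  have hUl : ↑(Ultrafilter.of l) ≤ l := Ultrafilter.of_le l
  exact ⟨_, isNonprincipalOn_of_ultrafilter _ (hUl hZ) (hUl.trans hl),
    fun A hA => ⟨inter_subset_right, inter_mem (hUl hA) (hUl hZ)⟩⟩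

lemma neBot_generate_inf_cofinite {𝒮 : Set (Set α)}
    (h : ∀ t ⊆ 𝒮, t.Finite → ∃ l : Filter α, l.NeBot ∧ l ≤ cofinite ∧ t ⊆ l.sets) :
    (generate 𝒮 ⊓ cofinite).NeBot := by
  refine inf_neBot_iff.2 fun a ha b hb => ?_
  obtain ⟨t, ht𝒮, htfin, hta⟩ := mem_generate_iff.1 ha
  obtain ⟨l, hl, hlcof, htl⟩ := h t ht𝒮 htfin
  exact (Filter.nonempty_of_mem (inter_mem ((sInter_mem htfin).2 htl) (hlcof hb))).mono
    (inter_subset_inter_left _ hta)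

end Ultrafilters

section Regular

open Cardinal

variable {κ : Cardinal.{u}}

lemma iSup_lt_ord_of_lift_mk_lt (hreg : κ.IsRegular) {ι : Type v} {f : ι → Ordinal.{u}}
    (hι : Cardinal.lift.{u} #ι < Cardinal.lift.{v} κ) (hf : ∀ i, f i < κ.ord) :
    ⨆ i, f i < κ.ord :=
  Ordinal.lift_iSup_lt_of_lt_cof (by rwa [← Ordinal.lift_cof, hreg.cof_ord]) hf

lemma lift_mk_Iio_lt_of_lt_ord {α : Ordinal.{u}} (hα : α < κ.ord) :
    Cardinal.lift.{u} #(Iio α) < Cardinal.lift.{u + 1} κ := by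
  rw [mk_Iio_ordinal, lift_lift, lift_lt]
  exact lt_ord.1 hα

lemma lift_mk_finset_Iio_lt_of_lt_ord (hunc : ℵ₀ < κ) {α : Ordinal.{u}} (hα : α < κ.ord) :
    Cardinal.lift.{u} #(Finset (Iio α)) < Cardinal.lift.{u + 1} κ := by
  cases finite_or_infinite (Iio α)
  · exact (lift_lt_aleph0.2 (lt_aleph0_of_finite _)).trans (by simpa using hunc)
  · rw [mk_finset_of_infinite]
    exact lift_mk_Iio_lt_of_lt_ord hα

def closurePoints (lam : Ordinal) (g : Ordinal → Ordinal) : Set Ordinal :=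
  {δ | δ < lam ∧ 0 < δ ∧ ∀ α < δ, g α < δ}

lemma isSuccLimit_of_mem_closurePoints {lam δ : Ordinal} {g : Ordinal → Ordinal}
    (hg : ∀ α, α < g α) (hδ : δ ∈ closurePoints lam g) : IsSuccLimit δ :=
  Ordinal.isSuccLimit_iff.2 ⟨hδ.2.1.ne', isSuccPrelimit_of_succ_lt fun α hα =>
    (succ_le_of_lt (hg α)).trans_lt (hδ.2.2 α hα)⟩

lemma isClubIn_closurePoints (hreg : κ.IsRegular) (hunc : ℵ₀ < κ) {g : Ordinal → Ordinal}
    (hg : ∀ α < κ.ord, g α < κ.ord) : IsClubIn (closurePoints κ.ord g) κ.ord := by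
  have hlim := isSuccLimit_ord hreg.aleph0_le
  refine ⟨fun δ hδ => hδ.1, fun β hβ => ?_, fun β hβ hβ0 hsup => ⟨hβ, pos_iff_ne_zero.2 hβ0, ?_⟩⟩
  · let h : Ordinal → Ordinal := fun x => ⨆ α : Iio x, succ (g α)
    have hh : ∀ x < κ.ord, h x < κ.ord := fun x hx =>
      iSup_lt_ord_of_lift_mk_lt hreg (lift_mk_Iio_lt_of_lt_ord hx)
        fun α => hlim.succ_lt (hg α (α.2.trans hx))
    have hgh : ∀ {α x}, α < x → g α < h x := fun {α x} hαx =>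
      (lt_succ _).trans_le (Ordinal.le_iSup (fun α : Iio x => succ (g α)) ⟨α, hαx⟩)
    have hβ : β < succ β := lt_succ β
    refine ⟨Ordinal.nfp h (succ β), ⟨Ordinal.nfp_lt_ord (by rwa [hreg.cof_ord]) hh
        (hlim.succ_lt ‹_›), hβ.pos.trans_le (Ordinal.le_nfp _ _), fun α hα => ?_⟩,
      hβ.trans_le (Ordinal.le_nfp _ _)⟩
    obtain ⟨n, hn⟩ := Ordinal.lt_nfp_iff.1 hα
    calc g α < h (h^[n] (succ β)) := hgh hn
      _ = h^[n + 1] (succ β) := (iterate_succ_apply' _ _ _).symm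
      _ ≤ _ := Ordinal.iterate_le_nfp _ _ _
  · intro α hα
    have hne : (closurePoints κ.ord g ∩ Iio β).Nonempty := by
      by_contra hemp
      rw [not_nonempty_iff_eq_empty.1 hemp, csSup_empty] at hsup
      exact hβ0 hsup.symm
    obtain ⟨δ, ⟨hδ, hδβ⟩, hαδ⟩ := exists_lt_of_lt_csSup hne (hsup ▸ hα)
    exact (hδ.2.2 α hαδ).trans hδβ

lemma exists_diagonal_club (hreg : κ.IsRegular) (hunc : ℵ₀ < κ)
    (D : Finset Ordinal → Set Ordinal) (hD : ∀ F, IsClubIn (D F) κ.ord)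
    (θ : Finset Ordinal → Ordinal) (hθ : ∀ F, θ F < κ.ord) :
    ∃ C, IsClubIn C κ.ord ∧ (∀ δ ∈ C, IsSuccLimit δ) ∧
      ∀ δ ∈ C, ∀ F : Finset Ordinal, (∀ j ∈ F, j < δ) → δ ∈ D F ∧ θ F < δ := by
  classical
  have hlim := isSuccLimit_ord hreg.aleph0_le
  let emb (α : Ordinal) (F : Finset (Iio α)) : Finset Ordinal := F.map (Embedding.subtype _)
  let g : Ordinal → Ordinal := fun α =>
    max (succ α) (⨆ F : Finset (Iio α), max (θ (emb α F)) (nextIn (D (emb α F)) α))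
  have hbound : ∀ α < κ.ord, ∀ F, max (θ F) (nextIn (D F) α) < κ.ord :=
    fun α hα F => max_lt (hθ F) ((hD F).nextIn_lt hα)
  have hg : ∀ α < κ.ord, g α < κ.ord := fun α hα => max_lt (hlim.succ_lt hα)
    (iSup_lt_ord_of_lift_mk_lt hreg (lift_mk_finset_Iio_lt_of_lt_ord hunc hα)
      fun F => hbound α hα _)
  have hle : ∀ α < κ.ord, ∀ F : Finset Ordinal, (∀ j ∈ F, j < α) →
      max (θ F) (nextIn (D F) α) ≤ g α := by
    intro α hα F hF
    obtain ⟨F', rfl⟩ : ∃ F', emb α F' = F := ⟨_, Finset.subtype_map_of_mem hF⟩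
    exact (le_ciSup ⟨κ.ord, forall_mem_range.2 fun F => (hbound α hα _).le⟩ F').trans
      (le_max_right _ _)
  have hClim : ∀ δ ∈ closurePoints κ.ord g, IsSuccLimit δ := fun δ =>
    isSuccLimit_of_mem_closurePoints fun α => (lt_succ α).trans_le (le_max_left _ _)
  refine ⟨_, isClubIn_closurePoints hreg hunc hg, hClim, fun δ hδ F hF => ?_⟩
  -- every finite `F ⊆ δ` lies below `α₀ < δ`, and `g` handles `F` at all `α ≥ α₀`
  set α₀ := F.sup succ
  have hα₀ : α₀ < δ := (Finset.sup_lt_iff hδ.2.1).2 fun j hj => (hClim δ hδ).succ_lt (hF j hj)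
  have hbelow : ∀ α, α₀ ≤ α → α < δ → max (θ F) (nextIn (D F) α) < δ := fun α h₁ h₂ =>
    (hle α (h₂.trans hδ.1) F fun j hj => (lt_succ j).trans_le ((Finset.le_sup hj).trans h₁)
      ).trans_lt (hδ.2.2 α h₂)
  refine ⟨(hD F).mem_of_forall_exists_lt hδ.1 hδ.2.1.ne' fun α hα => ?_,
    (le_max_left _ _).trans_lt (hbelow _ le_rfl hα₀)⟩
  have hmax : max α α₀ < δ := max_lt hα hα₀
  exact ⟨_, (hD F).nextIn_mem (hmax.trans hδ.1),
    (le_max_left _ _).trans_lt ((hD F).lt_nextIn (hmax.trans hδ.1)),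
    (le_max_right _ _).trans_lt (hbelow _ (le_max_right _ _) hmax)⟩

end Regular

/-- The supremum of an `ω`-chain of successive points of `C` is such a point. -/
lemma IsClubIn.exists_gt_notMem_image_nextIn {lam α : Ordinal} {C : Set Ordinal}
    (hcof : Cardinal.aleph0 < lam.cof) (hC : IsClubIn C lam) (hα : α < lam) :
    ∃ δ ∈ C, α < δ ∧ δ ∉ nextIn C '' C := by
  set c : ℕ → Ordinal := fun n => (nextIn C)^[n] α
  have hc_succ : ∀ n, c (n + 1) = nextIn C (c n) := fun n => iterate_succ_apply' _ _ _
  have hc_lt : ∀ n, c n < lam := fun n => by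
    induction n with
    | zero => exact hα
    | succ n ih => rw [hc_succ]; exact hC.nextIn_lt ih
  have hc_mem : ∀ n, c (n + 1) ∈ C := fun n => hc_succ n ▸ hC.nextIn_mem (hc_lt n)
  have hc_lt_succ : ∀ n, c n < c (n + 1) := fun n => hc_succ n ▸ hC.lt_nextIn (hc_lt n)
  have hc_lt_nfp : ∀ n, c n < Ordinal.nfp (nextIn C) α :=
    fun n => (hc_lt_succ n).trans_le (Ordinal.iterate_le_nfp _ _ _)
  have hδ : Ordinal.nfp (nextIn C) α < lam :=
    Ordinal.nfp_lt_ord hcof (fun _ => hC.nextIn_lt) hα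
  refine ⟨_, hC.mem_of_forall_exists_lt hδ (hc_lt_nfp 0).ne_bot fun x hx => ?_, hc_lt_nfp 0, ?_⟩
  · obtain ⟨n, hn⟩ := Ordinal.lt_nfp_iff.1 hx
    exact ⟨c (n + 1), hc_mem n, hn.trans (hc_lt_succ n), hc_lt_nfp (n + 1)⟩
  · rintro ⟨β, hβ, hβδ⟩
    obtain ⟨n, hn⟩ := Ordinal.lt_nfp_iff.1 (hβδ ▸ hC.lt_nextIn (hC.1 hβ))
    exact (hc_lt_nfp (n + 1)).not_ge
      (hβδ ▸ nextIn_le_of_mem (hc_mem n) (hn.trans (hc_lt_succ n)))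

def glue {α ι : Type*} (J A : ι → Set α) : Set α :=
  (⋃ k, A k ∩ J k) ∪ (⋃ k, J k)ᶜ

lemma glue_inter {α ι : Type*} {J A : ι → Set α} (hJ : Pairwise (Disjoint on J)) (i : ι) :
    glue J A ∩ J i = A i ∩ J i := by
  ext x
  simp only [glue, mem_inter_iff, mem_union, mem_iUnion, mem_compl_iff]
  constructor
  · rintro ⟨⟨k, hxk, hxJk⟩ | hx, hxJi⟩
    · obtain rfl : k = i := by_contra fun hne => (hJ hne).notMem_of_mem_left hxJk hxJi
      exact ⟨hxk, hxJi⟩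
    · exact absurd ⟨i, hxJi⟩ hx
  · exact fun ⟨hxA, hxJ⟩ => ⟨Or.inl ⟨i, hxA, hxJ⟩, hxJ⟩

instance {lam : Ordinal} : IsTrans (QZero lam) le0 :=
  ⟨fun _ _ _ hpq hqr => hpq.trans hqr⟩

namespace QZero

variable {lam δ : Ordinal} (p : QZero lam) {A : Set Ordinal}

lemma Z_subset_Iio (hδ : δ ∈ p.C) : p.Z δ ⊆ Iio lam :=
  fun _ hx => hx.2.trans (p.club.nextIn_lt (p.club.1 hδ))

lemma Z_mem_d (hδ : δ ∈ p.C) : p.Z δ ∈ p.d δ :=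
  (p.ultra δ hδ).1.2.1

lemma notMem_fil_of_frequently_inter_Z_eq_empty
    (h : ∀ ε < lam, ∃ δ ∈ p.C, ε ≤ δ ∧ A ∩ p.Z δ = ∅) : A ∉ fil p := by
  rintro ⟨-, ε, hε, hA⟩
  obtain ⟨δ, hδ, hεδ, hempty⟩ := h ε hε
  exact (p.ultra δ hδ).1.2.2.1 (hempty ▸ hA δ hδ hεδ)

theorem not_isUltrafilterOn_of_subset_fil (hcof : Cardinal.aleph0 < lam.cof)
    {𝒜 : Set (Set Ordinal)} (h𝒜 : 𝒜 ⊆ fil p) : ¬ IsUltrafilterOn (Iio lam) 𝒜 := by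
  intro hU
  set A := ⋃ β ∈ p.C, p.Z (nextIn p.C β)
  have hA : A ⊆ Iio lam :=
    iUnion₂_subset fun β hβ => p.Z_subset_Iio (p.club.nextIn_mem (p.club.1 hβ))
  rcases hU.2.2.2.2.2 A hA with hmem | hmem
  · refine p.notMem_fil_of_frequently_inter_Z_eq_empty (fun ε hε => ?_) (h𝒜 hmem)
    obtain ⟨δ, hδ, hεδ, hδS⟩ := p.club.exists_gt_notMem_image_nextIn hcof hε
    refine ⟨δ, hδ, hεδ.le, ?_⟩
    simp only [A, iUnion₂_inter, iUnion_eq_empty]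
    exact fun β hβ => (disjoint_Ico_nextIn (p.club.nextIn_mem (p.club.1 hβ)) hδ
      fun heq => hδS ⟨β, hβ, heq⟩).inter_eq
  · refine p.notMem_fil_of_frequently_inter_Z_eq_empty (fun ε hε => ?_) (h𝒜 hmem)
    obtain ⟨β, hβ, hεβ⟩ := p.club.2.1 ε hε
    have hβlt := p.club.1 hβ
    refine ⟨nextIn p.C β, p.club.nextIn_mem hβlt, (hεβ.trans (p.club.lt_nextIn hβlt)).le, ?_⟩
    exact eq_empty_of_forall_notMem fun x ⟨⟨_, hxA⟩, hxZ⟩ => hxA (mem_iUnion₂.2 ⟨β, hβ, hxZ⟩)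

lemma exists_of_filters {C : Set Ordinal} (hC : IsClubIn C lam) (hlim : ∀ δ ∈ C, IsSuccLimit δ)
    (l : Ordinal → Filter Ordinal) (hl : ∀ δ ∈ C, (l δ).NeBot)
    (hZ : ∀ δ ∈ C, Ico δ (nextIn C δ) ∈ l δ) (hcof : ∀ δ ∈ C, l δ ≤ cofinite) :
    ∃ r : QZero lam, r.C = C ∧ ∀ δ ∈ C, ∀ A ∈ l δ, A ∩ r.Z δ ∈ r.d δ := by
  have := fun δ (hδ : δ ∈ C) =>
    have := hl δ hδ
    exists_isNonprincipalOn (l δ) (hZ δ hδ) (hcof δ hδ)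
  choose! d hd hld using this
  exact ⟨⟨C, d, hC, hlim, hd⟩, rfl, hld⟩

lemma nonempty_of_isRegular {κ : Cardinal} (hreg : κ.IsRegular) (hunc : Cardinal.aleph0 < κ) :
    Nonempty (QZero κ.ord) := by
  have hlim := Cardinal.isSuccLimit_ord hreg.aleph0_le
  have hC := isClubIn_closurePoints hreg hunc fun α hα => hlim.succ_lt hα
  set C := closurePoints κ.ord succ
  have hClim : ∀ δ ∈ C, IsSuccLimit δ := fun δ => isSuccLimit_of_mem_closurePoints lt_succ
  obtain ⟨r, -⟩ := exists_of_filters hC hClim (fun δ => cofinite ⊓ 𝓟 (Ico δ (nextIn C δ)))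
    (fun δ hδ => frequently_mem_iff_neBot.1 (frequently_cofinite_iff_infinite.2
      (Ico_infinite_of_isSuccLimit (hC.lt_nextIn (hC.1 hδ))
        (hClim _ (hC.nextIn_mem (hC.1 hδ))))))
    (fun δ _ => mem_inf_of_right (mem_principal_self _)) (fun δ _ => inf_le_left)
  exact ⟨r⟩

def IsLargeOnBlocks (A : Set Ordinal) : Prop :=
  ∀ β ∈ p.C, A ∩ p.Z β ∈ p.d β

variable {p}

lemma IsLargeOnBlocks.inter_Iio_mem_fil (hlam : 0 < lam) (h : p.IsLargeOnBlocks A) :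
    A ∩ Iio lam ∈ fil p :=
  ⟨inter_subset_right, 0, hlam, fun β hβ _ => by
    rw [inter_assoc, inter_eq_right.2 (p.Z_subset_Iio hβ)]
    exact h β hβ⟩

lemma exists_isLargeOnBlocks_of_mem_fil (hA : A ∈ fil p) :
    ∃ A', p.IsLargeOnBlocks A' ∧ ∃ η < lam, A' \ Iio η ⊆ A := by
  obtain ⟨-, ε, hε, hAε⟩ := hA
  refine ⟨A ∪ Iio (nextIn p.C ε), fun β hβ => ?_, _, p.club.nextIn_lt hε,
    fun x hx => hx.1.resolve_right hx.2⟩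
  rcases lt_or_ge β ε with hβε | hεβ
  · have hZ : p.Z β ⊆ Iio (nextIn p.C ε) := fun x hx => hx.2.trans_le
      (nextIn_le_of_mem (p.club.nextIn_mem hε) (hβε.trans (p.club.lt_nextIn hε)))
    rw [inter_eq_right.2 (hZ.trans subset_union_right)]
    exact p.Z_mem_d hβ
  · exact (p.ultra β hβ).1.2.2.2.1 _ _ (hAε β hβ hεβ)
      (inter_subset_inter_left _ subset_union_left) inter_subset_right

lemma isLargeOnBlocks_glue {ι : Type*} {J A : ι → Set Ordinal} (hJ : Pairwise (Disjoint on J))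
    (hsat : ∀ k, ∀ β ∈ p.C, p.Z β ⊆ J k ∨ Disjoint (p.Z β) (J k))
    (hA : ∀ k, p.IsLargeOnBlocks (A k)) : p.IsLargeOnBlocks (glue J A) := by
  intro β hβ
  by_cases h : ∃ k, p.Z β ⊆ J k
  · obtain ⟨k, hk⟩ := h
    rw [← inter_eq_right.2 hk, ← inter_assoc, glue_inter hJ, inter_assoc, inter_eq_right.2 hk]
    exact hA k β hβ
  · push Not at h
    have hZ : p.Z β ⊆ glue J A := by
      refine Subset.trans ?_ subset_union_right
      simp only [compl_iUnion, subset_iInter_iff]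
      exact fun k => ((hsat k β hβ).resolve_left (h k)).subset_compl_right
    rw [inter_eq_right.2 hZ]
    exact p.Z_mem_d hβ

end QZero

def largeTraces {lam : Ordinal} (P : Ordinal → QZero lam) (δ δ' : Ordinal) : Set (Set Ordinal) :=
  {X | ∃ j < δ, ∃ A, (P j).IsLargeOnBlocks A ∧ X = A ∩ Ico δ δ'}

lemma neBot_generate_largeTraces {lam : Ordinal} {P : Ordinal → QZero lam}
    {q : Finset Ordinal → QZero lam} {θ : Finset Ordinal → Ordinal}
    (hq : ∀ F, ∀ j ∈ F, ∀ A, (P j).IsLargeOnBlocks A →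
      ∀ δ ∈ (q F).C, θ F ≤ δ → A ∩ (q F).Z δ ∈ (q F).d δ)
    {δ δ' : Ordinal} (hδ : ∀ F : Finset Ordinal, (∀ j ∈ F, j < δ) →
      δ ∈ (q F).C ∧ θ F ≤ δ ∧ nextIn (q F).C δ ≤ δ') :
    (generate (largeTraces P δ δ') ⊓ cofinite).NeBot := by
  refine neBot_generate_inf_cofinite fun t ht htfin => ?_
  choose! j hj A hA hX using fun X (hX : X ∈ t) => ht hX
  set F := (htfin.image j).toFinset
  have hjF : ∀ X ∈ t, j X ∈ F := fun X hX => (htfin.image j).mem_toFinset.2 ⟨X, hX, rfl⟩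
  obtain ⟨hδF, hθF, hnext⟩ := hδ F fun i hi => by
    obtain ⟨X, hX, rfl⟩ := (htfin.image j).mem_toFinset.1 hi
    exact hj X hX
  have hU := (q F).ultra δ hδF
  refine ⟨hU.1.toFilter, hU.1.neBot_toFilter, hU.toFilter_le_cofinite, fun X hXt => ?_⟩
  show X ∩ (q F).Z δ ∈ (q F).d δ
  rw [hX X hXt, inter_assoc, QZero.Z, inter_eq_right.2 (Ico_subset_Ico_right hnext)]
  exact hq F (j X) (hjF X hXt) (A X) (hA X hXt) δ hδF hθF

section UpperBound

open Cardinal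

variable {κ : Cardinal} (hreg : κ.IsRegular) (hunc : ℵ₀ < κ)
include hreg hunc

theorem exists_threshold_of_le0 {p q : QZero κ.ord} (hpq : le0 p q) :
    ∃ ε < κ.ord, ∀ A, p.IsLargeOnBlocks A → ∀ δ ∈ q.C, ε ≤ δ → A ∩ q.Z δ ∈ q.d δ := by
  by_contra! hcon
  choose! A hA δ hδ hεδ hAδ using fun ε (hε : ε < κ.ord) => hcon _ (p.club.nextIn_lt hε)
  -- glue the counterexamples on `J ε = [nextIn p.C ε, g ε) ⊇ q.Z (δ ε)`, for `ε` in a club `E`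
  set g : Ordinal → Ordinal := fun ε => nextIn p.C (nextIn q.C (δ ε))
  have hνlt : ∀ ε < κ.ord, nextIn q.C (δ ε) < κ.ord := fun ε hε =>
    q.club.nextIn_lt (q.club.1 (hδ ε hε))
  have hE := isClubIn_closurePoints hreg hunc fun ε hε => p.club.nextIn_lt (hνlt ε hε)
  set E := closurePoints κ.ord g
  set J : E → Set Ordinal := fun ε => Ico (nextIn p.C ε) (g ε)
  have hJ_lt : ∀ ε ε' : E, ε < ε' → Disjoint (J ε) (J ε') := fun ε ε' h =>
    Ico_disjoint_Ico.2 ((min_le_left _ _).trans ((ε'.2.2.2 ε h).le.trans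
      ((p.club.lt_nextIn ε'.2.1).le.trans (le_max_right _ _))))
  have hJ : Pairwise (Disjoint on J) := fun ε ε' hne =>
    hne.lt_or_gt.elim (hJ_lt ε ε') fun h => (hJ_lt ε' ε h).symm
  have hsat : ∀ ε : E, ∀ β ∈ p.C, p.Z β ⊆ J ε ∨ Disjoint (p.Z β) (J ε) := fun ε _ _ =>
    Ico_nextIn_subset_or_disjoint (p.club.nextIn_mem ε.2.1)
      (p.club.nextIn_mem (hνlt ε ε.2.1)) _
  have hZJ : ∀ ε : E, q.Z (δ ε) ⊆ J ε := fun ε =>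
    Ico_subset_Ico (hεδ ε ε.2.1) (p.club.lt_nextIn (hνlt ε ε.2.1)).le
  obtain ⟨-, ε₀, hε₀, hfil⟩ := hpq ((p.isLargeOnBlocks_glue hJ hsat
    fun ε => hA ε ε.2.1).inter_Iio_mem_fil hreg.ord_pos)
  obtain ⟨ε, hεE, hε₀ε⟩ := hE.2.1 ε₀ hε₀
  have hmem := hfil (δ ε) (hδ ε hεE.1)
    (hε₀ε.le.trans ((p.club.lt_nextIn hεE.1).le.trans (hεδ ε hεE.1)))
  rw [inter_assoc, inter_eq_right.2 (q.Z_subset_Iio (hδ ε hεE.1)),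
    ← inter_eq_right.2 (hZJ ⟨ε, hεE⟩), ← inter_assoc, glue_inter hJ, inter_assoc,
    inter_eq_right.2 (hZJ ⟨ε, hεE⟩)] at hmem
  exact hAδ ε hεE.1 hmem

lemma exists_threshold_of_directed {ι : Type*} [Nonempty ι] {P : ι → QZero κ.ord}
    (hP : Directed le0 P) (F : Finset ι) : ∃ q : QZero κ.ord, ∃ θ < κ.ord, ∀ j ∈ F,
      ∀ A, (P j).IsLargeOnBlocks A → ∀ δ ∈ q.C, θ ≤ δ → A ∩ q.Z δ ∈ q.d δ := by
  obtain ⟨k, hk⟩ := hP.finset_le F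
  choose! θ hθ hθA using fun j (hj : j ∈ F) => exists_threshold_of_le0 hreg hunc (hk j hj)
  exact ⟨P k, F.sup θ, (Finset.sup_lt_iff hreg.ord_pos).2 hθ,
    fun j hj A hA δ hδ hle => hθA j hj A hA δ hδ ((Finset.le_sup hj).trans hle)⟩

theorem exists_upper_bound_of_directed (P : Ordinal → QZero κ.ord) (hP : Directed le0 P) :
    ∃ r : QZero κ.ord, ∀ j < κ.ord, le0 (P j) r := by
  choose q θ hθ hq using exists_threshold_of_directed hreg hunc hP
  obtain ⟨C, hC, hClim, hCdiag⟩ :=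
    exists_diagonal_club hreg hunc (fun F => (q F).C) (fun F => (q F).club) θ hθ
  have hneBot : ∀ δ ∈ C, (generate (largeTraces P δ (nextIn C δ)) ⊓ cofinite).NeBot :=
    fun δ hδ => neBot_generate_largeTraces hq fun F hF =>
      have hδ' := hC.lt_nextIn (hC.1 hδ)
      ⟨(hCdiag δ hδ F hF).1, (hCdiag δ hδ F hF).2.le, nextIn_le_of_mem
        (hCdiag _ (hC.nextIn_mem (hC.1 hδ)) F fun j hj => (hF j hj).trans hδ').1 hδ'⟩
  have hZ : ∀ δ ∈ C, Ico δ (nextIn C δ) ∈ generate (largeTraces P δ (nextIn C δ)) ⊓ cofinite :=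
    fun δ hδ => mem_inf_of_left (mem_generate_of_mem ⟨0, (hClim δ hδ).bot_lt, univ,
      fun β hβ => by simpa using (P 0).Z_mem_d hβ, (univ_inter _).symm⟩)
  obtain ⟨r, rfl, hr⟩ :=
    QZero.exists_of_filters hC hClim _ hneBot hZ fun δ _ => inf_le_right
  refine ⟨r, fun j hj A hA => ?_⟩
  obtain ⟨A', hA', η, hη, hA'A⟩ := QZero.exists_isLargeOnBlocks_of_mem_fil hA
  have hlim := isSuccLimit_ord hreg.aleph0_le
  refine ⟨hA.1, max (succ j) η, max_lt (hlim.succ_lt hj) hη, fun δ hδ hle => ?_⟩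
  have hgen : A' ∩ r.Z δ ∈ largeTraces P δ (nextIn r.C δ) :=
    ⟨j, (lt_succ j).trans_le ((le_max_left _ _).trans hle), A', hA', rfl⟩
  refine (r.ultra δ hδ).1.2.2.2.1 _ _ (hr δ hδ _ (mem_inf_of_left (mem_generate_of_mem hgen)))
    (fun x ⟨⟨hxA', hxZ⟩, _⟩ => ⟨hA'A ⟨hxA', fun hxη => ?_⟩, hxZ⟩) inter_subset_right
  exact (hxη.trans_le ((le_max_right _ _).trans (hle.trans hxZ.1))).false

end UpperBound

lemma exists_ordinal_enumeration {α : Type v} {G : Set α} (hG : G.Nonempty) {κ : Cardinal.{u}}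
    (hcard : Cardinal.lift.{u} (Cardinal.mk G) ≤ Cardinal.lift.{v} κ) :
    ∃ P : Ordinal → α, (∀ j, P j ∈ G) ∧ ∀ x ∈ G, ∃ j < κ.ord, P j = x := by
  obtain ⟨f⟩ : Nonempty (G ↪ κ.ord.ToType) :=
    Cardinal.lift_mk_le'.1 (by rwa [Cardinal.mk_toType, Cardinal.card_ord])
  have : Nonempty G := hG.to_subtype
  refine ⟨fun j => if hj : j < κ.ord then (invFun f (Ordinal.ToType.mk ⟨j, hj⟩) : G) else hG.some,
    fun j => ?_, fun x hx => ⟨Ordinal.ToType.mk.symm (f ⟨x, hx⟩), (Ordinal.ToType.mk.symm _).2, ?_⟩⟩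
  · dsimp only
    split
    · exact Subtype.mem _
    · exact hG.some_mem
  · have hlt : (Ordinal.ToType.mk.symm (f ⟨x, hx⟩) : Ordinal) < κ.ord :=
      (Ordinal.ToType.mk.symm _).2
    simp only [dif_pos hlt]
    change ((invFun f (Ordinal.ToType.mk (Ordinal.ToType.mk.symm (f ⟨x, hx⟩))) : G) : α) = x
    rw [OrderIso.apply_symm_apply, leftInverse_invFun f.injective]

/-- A `≤⁰`-directed `G* ⊆ Q⁰_λ` of size `≤ λ` has a `≤⁰`-upper bound; consequently
`fil(G*)` is not an ultrafilter on `λ`. -/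
theorem statement4 (κ : Cardinal.{0}) (hreg : κ.IsRegular) (hunc : Cardinal.aleph0 < κ)
    (G : Set (QZero κ.ord))
    (hdir : ∀ p ∈ G, ∀ q ∈ G, ∃ r ∈ G, le0 p r ∧ le0 q r)
    (hcard : Cardinal.mk ↥G ≤ Cardinal.lift.{1,0} κ) :
    (∃ r : QZero κ.ord, ∀ p ∈ G, le0 p r) ∧
    ¬ IsUltrafilterOn (Iio κ.ord) (filG G) := by
  obtain ⟨r, hr⟩ : ∃ r : QZero κ.ord, ∀ p ∈ G, le0 p r := by
    rcases G.eq_empty_or_nonempty with rfl | hG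
    · exact (QZero.nonempty_of_isRegular hreg hunc).elim fun r => ⟨r, fun p hp => hp.elim⟩
    obtain ⟨P, hPG, hP⟩ := exists_ordinal_enumeration (κ := κ) hG (by simpa using hcard)
    have hdirP : Directed le0 P := fun i j => by
      obtain ⟨r, hrG, hir, hjr⟩ := hdir _ (hPG i) _ (hPG j)
      obtain ⟨k, -, rfl⟩ := hP r hrG
      exact ⟨k, hir, hjr⟩
    obtain ⟨r, hr⟩ := exists_upper_bound_of_directed hreg hunc P hdirP
    exact ⟨r, fun p hp => by obtain ⟨j, hj, rfl⟩ := hP p hp; exact hr j hj⟩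
  exact ⟨⟨r, hr⟩, r.not_isUltrafilterOn_of_subset_fil (by rwa [hreg.cof_ord])
    (iUnion₂_subset hr)⟩
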